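/- arXiv:1008.0431 — 5 statements merged into one kernel-verified Lean document; each statement's English description precedes it below -/
import Mathlib

section
/- Let γ, δ, λ, F̄, S̄ be positive reals and set ξ = γF̄/δ. Define p₂(y) = (δ+γ)y² − γ(1/δ + F̄ + ξ + S̄)y + γξS̄. Then p₂ has exactly two positive real roots α₁ < α₂, and they satisfy α₁ < ξ < α₂. -/
/-!
A quadratic with positive leading coefficient that is negative at `ξ` has positive discriminant
and its two roots straddle `ξ`. Here `p₂ ξ = -γξ/δ < 0`, because `δξ = γF̄` makes everything but
the `1/δ` term cancel. The smaller root is positive as well: `p₂ > 0` on `(-∞, 0]`, since its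
linear coefficient is negative and its constant term is positive.
-/

lemma Real.exists_roots_lt_lt_of_quadratic_neg {a b c ξ : ℝ} (ha : 0 < a)
    (hξ : a * ξ ^ 2 + b * ξ + c < 0) :
    ∃ α₁ α₂ : ℝ, α₁ < ξ ∧ ξ < α₂ ∧
      ∀ y : ℝ, a * y ^ 2 + b * y + c = 0 ↔ y = α₁ ∨ y = α₂ := by
  set s := √(discrim a b c)
  have hdiscrim : discrim a b c = (2 * a * ξ + b) ^ 2 - 4 * a * (a * ξ ^ 2 + b * ξ + c) := by
    rw [discrim]; ring
  have hdiscrim_pos : 0 < discrim a b c := by rw [hdiscrim]; nlinarith [sq_nonneg (2 * a * ξ + b)]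
  have hs : discrim a b c = s * s := (Real.mul_self_sqrt hdiscrim_pos.le).symm
  have hξs : |2 * a * ξ + b| < s := by
    refine abs_lt_of_sq_lt_sq ?_ (Real.sqrt_nonneg _)
    rw [Real.sq_sqrt hdiscrim_pos.le, hdiscrim]
    nlinarith
  obtain ⟨hlow, hhigh⟩ := abs_lt.mp hξs
  refine ⟨(-b - s) / (2 * a), (-b + s) / (2 * a), ?_, ?_, fun y => ?_⟩
  · rw [div_lt_iff₀ (by positivity)]; linarith
  · rw [lt_div_iff₀ (by positivity)]; linarith
  · rw [or_comm, ← quadratic_eq_zero_iff ha.ne' hs y, sq]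

lemma pos_of_quadratic_eq_zero {a b c y : ℝ} (ha : 0 < a) (hb : b < 0) (hc : 0 < c)
    (hy : a * y ^ 2 + b * y + c = 0) : 0 < y := by
  by_contra! hy_nonpos
  nlinarith [mul_nonneg_of_nonpos_of_nonpos hb.le hy_nonpos, sq_nonneg y]

theorem stmt_4_general (γ δ F S : ℝ) (hγ : 0 < γ) (hδ : 0 < δ)
    (hF : 0 < F) (hS : 0 < S)
    (ξ : ℝ) (hξ : ξ = γ * F / δ)
    (p₂ : ℝ → ℝ)
    (hp₂ : p₂ = fun y => (δ + γ) * y ^ 2 - γ * (1 / δ + F + ξ + S) * y + γ * ξ * S) :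
    ∃ α₁ α₂ : ℝ, 0 < α₁ ∧ α₁ < ξ ∧ ξ < α₂ ∧ p₂ α₁ = 0 ∧ p₂ α₂ = 0 ∧
      ∀ y : ℝ, 0 < y → p₂ y = 0 → y = α₁ ∨ y = α₂ := by
  have hξ_pos : 0 < ξ := by rw [hξ]; positivity
  set b := -(γ * (1 / δ + F + ξ + S))
  have hp₂_eq : ∀ y, p₂ y = (δ + γ) * y ^ 2 + b * y + γ * ξ * S := by
    intro y; rw [hp₂]; ring
  have hp₂ξ : p₂ ξ = -(γ * ξ / δ) := by
    rw [hp₂, hξ]; field_simp; ring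
  have hp₂ξ_neg : p₂ ξ < 0 := by rw [hp₂ξ]; exact neg_neg_of_pos (by positivity)
  rw [hp₂_eq] at hp₂ξ_neg
  obtain ⟨α₁, α₂, hα₁ξ, hξα₂, hroots⟩ :=
    Real.exists_roots_lt_lt_of_quadratic_neg (by positivity) hp₂ξ_neg
  have hα₁ : p₂ α₁ = 0 := by rw [hp₂_eq, hroots]; exact Or.inl rfl
  have hb : b < 0 := neg_neg_of_pos (by positivity)
  refine ⟨α₁, α₂, ?_, hα₁ξ, hξα₂, hα₁, by rw [hp₂_eq, hroots]; exact Or.inr rfl,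
    fun y _ hy => (hroots y).mp (hp₂_eq y ▸ hy)⟩
  exact pos_of_quadratic_eq_zero (by positivity) hb (by positivity) (hp₂_eq α₁ ▸ hα₁)

/-- The polynomial p₂(y) = (δ+γ)y² − γ(1/δ + F̄ + ξ + S̄)y + γξS̄, with ξ = γF̄/δ,
has exactly two positive real roots α₁ < α₂, satisfying α₁ < ξ < α₂. -/
theorem stmt_4 (γ δ lam F S : ℝ) (hγ : 0 < γ) (hδ : 0 < δ) (hlam : 0 < lam)
    (hF : 0 < F) (hS : 0 < S)
    (ξ : ℝ) (hξ : ξ = γ * F / δ)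
    (p₂ : ℝ → ℝ)
    (hp₂ : p₂ = fun y => (δ + γ) * y ^ 2 - γ * (1 / δ + F + ξ + S) * y + γ * ξ * S) :
    ∃ α₁ α₂ : ℝ, 0 < α₁ ∧ α₁ < ξ ∧ ξ < α₂ ∧ p₂ α₁ = 0 ∧ p₂ α₂ = 0 ∧
      ∀ y : ℝ, 0 < y → p₂ y = 0 → y = α₁ ∨ y = α₂ :=
  stmt_4_general γ δ F S hγ hδ hF hS ξ hξ p₂ hp₂
end

section
/- Let γ, δ, λ, F̄, S̄ > 0, ξ = γF̄/δ, p₁(y) = λy(ξ − y), p₂(y) = (δ+γ)y² − γ(1/δ + F̄ + ξ + S̄)y + γξS̄, and let α₁ be the smaller positive root of p₂. Then g = p₁/p₂ is continuous and strictly increasing on [0, α₁), g(0) = 0, and g(y) → +∞ as y → α₁ from the left. -/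
/-!
Writing `p₂` with `F = δξ/γ` eliminated as `p₂ y = γS(ξ - y) - y (γ/δ + (δ+γ)(ξ - y))` and
`p₁ y = λ y (ξ - y)`, the cross difference `p₁ b p₂ a - p₁ a p₂ b` factors as
`λ (b - a) (γS (ξ - a)(ξ - b) + (γ/δ) a b)`, which is positive for `0 ≤ a < b < ξ`. Since
`p₂ 0 > 0 > p₂ ξ` and `p₂` has no root in `(0, α₁)`, it is positive on `[0, α₁)` and `α₁ < ξ`;
so `g` is increasing there, and it blows up at `α₁` because `p₁ α₁ > 0 = p₂ α₁`.
-/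

open Set Filter Topology

lemma pos_on_Ico_of_ne_zero {f : ℝ → ℝ} {a b : ℝ} (hf : ContinuousOn f (Ico a b))
    (hfa : 0 < f a) (hne : ∀ y ∈ Ico a b, f y ≠ 0) : ∀ y ∈ Ico a b, 0 < f y := by
  intro y hy
  by_contra! hfy
  have hsub : Icc a y ⊆ Ico a b := Icc_subset_Ico_right hy.2
  obtain ⟨c, hc, hfc⟩ :=
    intermediate_value_Icc' hy.1 (hf.mono hsub) (mem_Icc.mpr ⟨hfy, hfa.le⟩)
  exact hne c (hsub hc) hfc

lemma tendsto_div_atTop_of_tendsto_nhdsGT_zero {α : Type*} {l : Filter α} {f p : α → ℝ}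
    {c : ℝ} (hc : 0 < c) (hf : Tendsto f l (𝓝 c)) (hp : Tendsto p l (𝓝[>] 0)) :
    Tendsto (fun y => f y / p y) l atTop := by
  simpa only [div_eq_mul_inv, Pi.inv_apply] using hf.pos_mul_atTop hc hp.inv_tendsto_nhdsGT_zero

lemma tendsto_nhdsGT_zero_of_root {p : ℝ → ℝ} {a b : ℝ} (hab : a < b) (hp : ContinuousAt p b)
    (hpb : p b = 0) (hpos : ∀ y ∈ Ico a b, 0 < p y) : Tendsto p (𝓝[<] b) (𝓝[>] 0) := by
  refine tendsto_nhdsWithin_of_tendsto_nhds_of_eventually_within _ ?_ ?_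
  · simpa only [hpb] using hp.tendsto.mono_left nhdsWithin_le_nhds
  · filter_upwards [Ioo_mem_nhdsLT hab] with y hy
    exact hpos y (Ioo_subset_Ico_self hy)

lemma cross_mul_sub_cross_mul (lam c d e ξ a b : ℝ) :
    lam * b * (ξ - b) * (d * (ξ - a) - a * (c + e * (ξ - a)))
      - lam * a * (ξ - a) * (d * (ξ - b) - b * (c + e * (ξ - b)))
      = lam * (b - a) * (d * (ξ - a) * (ξ - b) + c * (a * b)) := by
  ring

lemma strictMonoOn_div_of_denominator_pos {lam c d e ξ : ℝ} {s : Set ℝ} (hlam : 0 < lam)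
    (hc : 0 ≤ c) (hd : 0 < d) (hs : s ⊆ Ico 0 ξ)
    (hpos : ∀ y ∈ s, 0 < d * (ξ - y) - y * (c + e * (ξ - y))) :
    StrictMonoOn (fun y => lam * y * (ξ - y) / (d * (ξ - y) - y * (c + e * (ξ - y)))) s := by
  intro a ha b hb hab
  obtain ⟨ha₀, haξ⟩ := hs ha
  obtain ⟨-, hbξ⟩ := hs hb
  rw [div_lt_div_iff₀ (hpos a ha) (hpos b hb), ← sub_pos, cross_mul_sub_cross_mul]
  have hprod : 0 < d * (ξ - a) * (ξ - b) := by
    have := sub_pos.mpr haξ; have := sub_pos.mpr hbξ; positivity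
  have hab₀ : 0 ≤ c * (a * b) := by have := ha₀.trans hab.le; positivity
  exact mul_pos (mul_pos hlam (sub_pos.mpr hab)) (by linarith)

/-- g = p₁/p₂ is continuous and strictly increasing on [0, α₁), g(0) = 0, and
g(y) → +∞ as y → α₁⁻, where α₁ is the smaller positive root of p₂. -/
theorem stmt_5 (γ δ lam F S : ℝ) (hγ : 0 < γ) (hδ : 0 < δ) (hlam : 0 < lam)
    (hF : 0 < F) (hS : 0 < S)
    (ξ : ℝ) (hξ : ξ = γ * F / δ)
    (p₁ p₂ : ℝ → ℝ)
    (hp₁ : p₁ = fun y => lam * y * (ξ - y))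
    (hp₂ : p₂ = fun y => (δ + γ) * y ^ 2 - γ * (1 / δ + F + ξ + S) * y + γ * ξ * S)
    (α₁ : ℝ) (hα₁pos : 0 < α₁) (hα₁root : p₂ α₁ = 0)
    (hα₁min : ∀ y : ℝ, 0 < y → y < α₁ → p₂ y ≠ 0)
    (g : ℝ → ℝ) (hg : g = fun y => p₁ y / p₂ y) :
    ContinuousOn g (Set.Ico 0 α₁) ∧ StrictMonoOn g (Set.Ico 0 α₁) ∧ g 0 = 0 ∧
      Filter.Tendsto g (nhdsWithin α₁ (Set.Iio α₁)) Filter.atTop := by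
  have hξpos : 0 < ξ := by rw [hξ]; positivity
  have hp₂' : p₂ = fun y => γ * S * (ξ - y) - y * (γ / δ + (δ + γ) * (ξ - y)) := by
    subst hξ hp₂; funext y; field_simp; ring
  have hp₂c : Continuous p₂ := by rw [hp₂']; fun_prop
  have hp₂0 : 0 < p₂ 0 := by rw [hp₂']; simp only [sub_zero, zero_mul]; positivity
  have hpos : ∀ y ∈ Ico 0 α₁, 0 < p₂ y :=
    pos_on_Ico_of_ne_zero hp₂c.continuousOn hp₂0 fun y hy =>
      hy.1.eq_or_lt.elim (fun h => h ▸ hp₂0.ne') fun h => hα₁min y h hy.2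
  have hp₂ξ : p₂ ξ < 0 := by rw [hp₂']; simp only [sub_self]; nlinarith [div_pos hγ hδ]
  have hα₁ξ : α₁ < ξ := by
    refine lt_of_le_of_ne (not_lt.mp fun h => ?_) (fun h => ?_)
    · exact (hpos ξ ⟨hξpos.le, h⟩).not_gt hp₂ξ
    · exact hp₂ξ.ne (h ▸ hα₁root)
  have hp₁α₁ : 0 < p₁ α₁ := by rw [hp₁]; exact mul_pos (mul_pos hlam hα₁pos) (by linarith)
  have hp₁c : Continuous p₁ := by rw [hp₁]; fun_prop
  subst hg
  refine ⟨hp₁c.continuousOn.div hp₂c.continuousOn fun y hy => (hpos y hy).ne', ?_, ?_, ?_⟩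
  · rw [hp₂'] at hpos
    rw [hp₁, hp₂']
    exact strictMonoOn_div_of_denominator_pos hlam (by positivity) (by positivity)
      (Ico_subset_Ico_right hα₁ξ.le) hpos
  · simp [hp₁]
  · exact tendsto_div_atTop_of_tendsto_nhdsGT_zero hp₁α₁
      (hp₁c.tendsto α₁ |>.mono_left nhdsWithin_le_nhds)
      (tendsto_nhdsGT_zero_of_root hα₁pos hp₂c.continuousAt hα₁root hpos)
end

section
/- Let δ, γ, F̄, S̄ > 0 and for y ∈ [0, S̄) define the polynomial in x: d(x, y) = (S̄ − y) − x − F̄(δ+γ)x + δ(S̄ − y)x − δx². Then for each fixed y ∈ [0, S̄), d(·, y) has exactly one positive real root ρ(y), and ρ is strictly decreasing in y: if 0 ≤ y₁ < y₂ < S̄ then ρ(y₂) < ρ(y₁). -/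
/-!
Up to sign, `d(·, y)` is the quadratic `δ x² + b x - (S̄ - y)` with `b = 1 + F̄(δ + γ) - δ(S̄ - y)`.
Its constant term is negative, so it has a root `r > 0`, and `r · q(x) = (x - r)(δ x r + S̄ - y)`
shows that on `x ≥ 0` it has the sign of `x - r`. Moving `y` from `y₁` up to `y₂` adds
`(y₂ - y₁)(1 + δ x) > 0` to the quadratic, so at the old root `ρ(y₁)` it becomes positive,
which puts the new root `ρ(y₂)` strictly to the left of it.
-/

namespace Quadratic

variable {a b c r x : ℝ}

noncomputable def posRoot (a b c : ℝ) : ℝ := (-b + √(discrim a b c)) / (2 * a)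

lemma discrim_gt_sq (ha : 0 < a) (hc : c < 0) : b ^ 2 < discrim a b c := by
  unfold discrim; nlinarith

lemma posRoot_pos (ha : 0 < a) (hc : c < 0) : 0 < posRoot a b c := by
  have : |b| < √(discrim a b c) := by
    rw [← Real.sqrt_sq_eq_abs]
    exact Real.sqrt_lt_sqrt (sq_nonneg b) (discrim_gt_sq ha hc)
  unfold posRoot
  exact div_pos (by linarith [le_abs_self b]) (by positivity)

lemma posRoot_isRoot (ha : 0 < a) (hc : c < 0) :
    a * (posRoot a b c * posRoot a b c) + b * posRoot a b c + c = 0 := by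
  have hdisc : discrim a b c = √(discrim a b c) * √(discrim a b c) :=
    (Real.mul_self_sqrt ((sq_nonneg b).trans (discrim_gt_sq ha hc).le)).symm
  exact (quadratic_eq_zero_iff ha.ne' hdisc _).mpr (Or.inl rfl)

lemma mul_eval_eq_of_isRoot (hr : a * (r * r) + b * r + c = 0) :
    r * (a * (x * x) + b * x + c) = (x - r) * (a * x * r - c) := by
  linear_combination x * hr

lemma cofactor_pos (ha : 0 < a) (hc : c < 0) (hr₀ : 0 < r) (hx : 0 ≤ x) :
    0 < a * x * r - c := by
  nlinarith [mul_nonneg (mul_nonneg ha.le hx) hr₀.le]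

lemma eval_pos_iff_of_isRoot (ha : 0 < a) (hc : c < 0) (hr₀ : 0 < r)
    (hr : a * (r * r) + b * r + c = 0) (hx : 0 ≤ x) :
    0 < a * (x * x) + b * x + c ↔ r < x := by
  have hcof := cofactor_pos ha hc hr₀ hx
  rw [← mul_pos_iff_of_pos_left hr₀, mul_eval_eq_of_isRoot hr, mul_pos_iff_of_pos_right hcof,
    sub_pos]

lemma eq_of_isRoot_of_isRoot (ha : 0 < a) (hc : c < 0) (hr₀ : 0 < r)
    (hr : a * (r * r) + b * r + c = 0) (hx : 0 ≤ x) (hxr : a * (x * x) + b * x + c = 0) :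
    x = r := by
  have hcof := cofactor_pos ha hc hr₀ hx
  have := mul_eval_eq_of_isRoot (x := x) hr
  rw [hxr, mul_zero, eq_comm, mul_eq_zero] at this
  exact sub_eq_zero.mp (this.resolve_right hcof.ne')

end Quadratic

open Quadratic in
theorem stmt_7_general (δ γ F S : ℝ) (hδ : 0 < δ)
    (d : ℝ → ℝ → ℝ)
    (hd : d = fun x y => (S - y) - x - F * (δ + γ) * x + δ * (S - y) * x - δ * x ^ 2) :
    ∃ ρ : ℝ → ℝ,
      (∀ y : ℝ, 0 ≤ y → y < S →
        (0 < ρ y ∧ d (ρ y) y = 0 ∧ ∀ x : ℝ, 0 < x → d x y = 0 → x = ρ y)) ∧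
      ∀ y₁ y₂ : ℝ, 0 ≤ y₁ → y₁ < y₂ → y₂ < S → ρ y₂ < ρ y₁ := by
  set q : ℝ → ℝ → ℝ := fun x y =>
    δ * (x * x) + (1 + F * (δ + γ) - δ * (S - y)) * x + -(S - y) with hq
  set ρ : ℝ → ℝ := fun y => posRoot δ (1 + F * (δ + γ) - δ * (S - y)) (-(S - y)) with hρ
  have hdq : ∀ x y, d x y = -q x y := fun x y => by rw [hd, hq]; ring
  have hc : ∀ y, y < S → -(S - y) < 0 := fun y hy => by linarith
  have hρ_pos : ∀ y, y < S → 0 < ρ y := fun y hy => posRoot_pos hδ (hc y hy)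
  have hρ_root : ∀ y, y < S → q (ρ y) y = 0 := fun y hy => posRoot_isRoot hδ (hc y hy)
  refine ⟨ρ, fun y _ hyS => ⟨hρ_pos y hyS, by rw [hdq, hρ_root y hyS, neg_zero], ?_⟩, ?_⟩
  · intro x hx hxy
    rw [hdq, neg_eq_zero] at hxy
    exact eq_of_isRoot_of_isRoot hδ (hc y hyS) (hρ_pos y hyS) (hρ_root y hyS) hx.le hxy
  · intro y₁ y₂ _ h₁₂ h₂S
    have hq_pos : 0 < q (ρ y₁) y₂ := by
      have hshift : q (ρ y₁) y₂ = q (ρ y₁) y₁ + (y₂ - y₁) * (1 + δ * ρ y₁) := by rw [hq]; ring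
      rw [hshift, hρ_root y₁ (h₁₂.trans h₂S), zero_add]
      have := hρ_pos y₁ (h₁₂.trans h₂S)
      exact mul_pos (sub_pos.mpr h₁₂) (by positivity)
    exact (eval_pos_iff_of_isRoot hδ (hc y₂ h₂S) (hρ_pos y₂ h₂S) (hρ_root y₂ h₂S)
      (hρ_pos y₁ (h₁₂.trans h₂S)).le).mp hq_pos

/-- For each y ∈ [0, S̄), the quadratic d(·, y) has exactly one positive root ρ(y),
and ρ is strictly decreasing in y. -/
theorem stmt_7 (δ γ F S : ℝ) (hδ : 0 < δ) (hγ : 0 < γ) (hF : 0 < F) (hS : 0 < S)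
    (d : ℝ → ℝ → ℝ)
    (hd : d = fun x y => (S - y) - x - F * (δ + γ) * x + δ * (S - y) * x - δ * x ^ 2) :
    ∃ ρ : ℝ → ℝ,
      (∀ y : ℝ, 0 ≤ y → y < S →
        (0 < ρ y ∧ d (ρ y) y = 0 ∧ ∀ x : ℝ, 0 < x → d x y = 0 → x = ρ y)) ∧
      ∀ y₁ y₂ : ℝ, 0 ≤ y₁ → y₁ < y₂ → y₂ < S → ρ y₂ < ρ y₁ :=
  stmt_7_general δ γ F S hδ d hd
end

section
/- Let λ, δ, γ, F̄, S̄, Ē > 0, Δ = γF̄ − δĒ, and φ(s) = λF̄s/((1+δs)(Ē − Δs)) + s + (γ+δ)F̄s/(1+δs) on Γ (where Γ = [0,∞) if Δ ≤ 0 and Γ = [0, Ē/Δ) if Δ > 0). Let ψ : [0,∞) → Γ be the inverse of φ. Then as S̄ → ∞, ψ(S̄) → +∞ if c¹F̄ ≤ c⁰Ē (equivalently Δ ≤ 0 with γ = (c¹/c⁰)δ), while ψ(S̄) → Ē/Δ if Δ > 0. -/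
/-!
φ is continuous, hence bounded, on every compact interval `[0, a]` on which `E - Δ s` stays
positive. Since `φ (ψ S) = S → ∞`, the value `ψ S` eventually leaves each such interval. These
intervals exhaust `[0, ∞)` when `Δ ≤ 0` and `[0, E / Δ)` when `Δ > 0`; in the latter case
`ψ S < E / Δ` as well, which squeezes `ψ S` to `E / Δ`.
-/

open Filter Set

lemma IsCompact.eventually_notMem_of_rightInvOn {α : Type*} [TopologicalSpace α]
    {φ : α → ℝ} {ψ : ℝ → α} {K : Set α} (hK : IsCompact K) (hφ : ContinuousOn φ K)
    (hψ : ∀ᶠ S in atTop, φ (ψ S) = S) :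
    ∀ᶠ S in atTop, ψ S ∉ K := by
  obtain ⟨M, hM⟩ := hK.bddAbove_image hφ
  filter_upwards [hψ, eventually_gt_atTop M] with S hS hMS hmem
  have : S ≤ M := hS ▸ hM (mem_image_of_mem φ hmem)
  linarith

lemma eventually_lt_of_continuousOn_Icc {φ ψ : ℝ → ℝ} {a : ℝ}
    (hφ : ContinuousOn φ (Icc 0 a)) (hψ : ∀ᶠ S in atTop, 0 ≤ ψ S ∧ φ (ψ S) = S) :
    ∀ᶠ S in atTop, a < ψ S := by
  filter_upwards [hψ, isCompact_Icc.eventually_notMem_of_rightInvOn hφ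
    (hψ.mono fun _ h => h.2)] with S hS hnotMem
  by_contra! hle
  exact hnotMem ⟨hS.1, hle⟩

lemma continuousOn_steadyStateMap {lam δ γ F E Δ : ℝ} {K : Set ℝ}
    (hδ : ∀ s ∈ K, 1 + δ * s ≠ 0) (hΔ : ∀ s ∈ K, E - Δ * s ≠ 0) :
    ContinuousOn (fun s => lam * F * s / ((1 + δ * s) * (E - Δ * s)) + s
      + (γ + δ) * F * s / (1 + δ * s)) K := by
  refine ((ContinuousOn.div (by fun_prop) (by fun_prop) fun s hs => ?_).add continuousOn_id).add
    (ContinuousOn.div (by fun_prop) (by fun_prop) hδ)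
  exact mul_ne_zero (hδ s hs) (hΔ s hs)

theorem stmt_14_general (lam δ γ F E c0 c1 : ℝ) (hδ : 0 < δ)
    (hE : 0 < E) (hc0 : 0 < c0)
    (hγ : γ = (c1 / c0) * δ)
    (Δ : ℝ) (hΔ : Δ = γ * F - δ * E)
    (Γ : Set ℝ) (hΓ : Γ = if Δ ≤ 0 then Set.Ici 0 else Set.Ico 0 (E / Δ))
    (φ : ℝ → ℝ)
    (hφ : φ = fun s => lam * F * s / ((1 + δ * s) * (E - Δ * s)) + s
        + (γ + δ) * F * s / (1 + δ * s))
    (ψ : ℝ → ℝ)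
    (hψ : ∀ S : ℝ, 0 ≤ S → ψ S ∈ Γ ∧ φ (ψ S) = S) :
    (c1 * F ≤ c0 * E → Filter.Tendsto ψ Filter.atTop Filter.atTop) ∧
    (0 < Δ → Filter.Tendsto ψ Filter.atTop (nhds (E / Δ))) := by
  have hΓ_nonneg : Γ ⊆ Ici 0 := by
    rw [hΓ]; split_ifs
    exacts [subset_rfl, Ico_subset_Ici_self]
  have hψ_eventually : ∀ᶠ S in atTop, 0 ≤ ψ S ∧ φ (ψ S) = S :=
    (eventually_ge_atTop 0).mono fun S hS => ⟨hΓ_nonneg (hψ S hS).1, (hψ S hS).2⟩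
  have escape (a : ℝ) (ha : ∀ s ∈ Icc 0 a, Δ * s < E) : ∀ᶠ S in atTop, a < ψ S := by
    refine eventually_lt_of_continuousOn_Icc ?_ hψ_eventually
    rw [hφ]
    exact continuousOn_steadyStateMap (fun s hs => (by nlinarith [hs.1] : 0 < 1 + δ * s).ne')
      (fun s hs => (sub_pos.2 (ha s hs)).ne')
  constructor
  · intro hcE
    have hΔ_nonpos : Δ ≤ 0 := by
      have : Δ = δ / c0 * (c1 * F - c0 * E) := by rw [hΔ, hγ]; field_simp
      rw [this]
      exact mul_nonpos_of_nonneg_of_nonpos (by positivity) (by linarith)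
    refine tendsto_atTop.2 fun b => (escape (max b 0) fun s hs => ?_).mono
      fun S hS => (le_max_left b 0).trans hS.le
    nlinarith [hs.1]
  · intro hΔ_pos
    have hlt : ∀ S, 0 ≤ S → ψ S < E / Δ := fun S hS => by
      have := (hψ S hS).1
      rw [hΓ, if_neg hΔ_pos.not_ge] at this
      exact this.2
    refine tendsto_order.2 ⟨fun b hb => (escape (max b 0) fun s hs => ?_).mono
      fun S hS => (le_max_left b 0).trans_lt hS, fun b hb =>
        (eventually_ge_atTop 0).mono fun S hS => (hlt S hS).trans hb⟩
    have : s < E / Δ := hs.2.trans_lt (max_lt hb (div_pos hE hΔ_pos))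
    rwa [lt_div_iff₀ hΔ_pos, mul_comm] at this

/-- Asymptotics of the steady-state modified substrate ψ(S̄) as S̄ → ∞:
ψ → ∞ if c¹F̄ ≤ c⁰Ē (i.e. Δ ≤ 0), and ψ → Ē/Δ if Δ > 0. -/
theorem stmt_14 (lam δ γ F E c0 c1 : ℝ) (hlam : 0 < lam) (hδ : 0 < δ)
    (hF : 0 < F) (hE : 0 < E) (hc0 : 0 < c0) (hc1 : 0 < c1)
    (hγ : γ = (c1 / c0) * δ)
    (Δ : ℝ) (hΔ : Δ = γ * F - δ * E)
    (Γ : Set ℝ) (hΓ : Γ = if Δ ≤ 0 then Set.Ici 0 else Set.Ico 0 (E / Δ))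
    (φ : ℝ → ℝ)
    (hφ : φ = fun s => lam * F * s / ((1 + δ * s) * (E - Δ * s)) + s
        + (γ + δ) * F * s / (1 + δ * s))
    (ψ : ℝ → ℝ)
    (hψ : ∀ S : ℝ, 0 ≤ S → ψ S ∈ Γ ∧ φ (ψ S) = S) :
    (c1 * F ≤ c0 * E → Filter.Tendsto ψ Filter.atTop Filter.atTop) ∧
    (0 < Δ → Filter.Tendsto ψ Filter.atTop (nhds (E / Δ))) :=
  stmt_14_general lam δ γ F E c0 c1 hδ hE hc0 hγ Δ hΔ Γ hΓ φ hφ ψ hψ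
end

section
/- Let λ, δ, γ, F̄ > 0 and for S̄ > 0 define d_{S̄}(x, y) = (S̄ − y) − x − F̄(δ+γ)x + δ(S̄−y)x − δx². For fixed x, y ≥ 0 with y < S̄ < S̄', one has d_{S̄}(x,y) < d_{S̄'}(x,y); consequently the unique positive root ρ_{S̄}(y) of d_{S̄}(·, y) is strictly increasing in S̄, and ρ_{S̄}(y) → +∞ as S̄ → +∞. -/
/-! For fixed `y`, the layer polynomial is `(S - y)(1 + δx) - κx - δx²`: affine and increasing in
`S` for `x ≥ 0`, and concave in `x` with value `S - y > 0` at `x = 0`. Concavity forces it to be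
positive on `[0, x]` whenever it is positive at `x`, so every such `x` lies strictly below the
positive root. Raising `S` makes the polynomial positive at the old root, and, being affine in `S`,
eventually positive at any given `x`, which gives both monotonicity and divergence of the root. -/

open Set Filter

theorem ConcaveOn.lt_of_apply_eq_zero {f : ℝ → ℝ} {a x r : ℝ} (hf : ConcaveOn ℝ (Ici a) f)
    (hfa : 0 < f a) (hx : a ≤ x) (hfx : 0 < f x) (hr : a ≤ r) (hfr : f r = 0) : x < r := by
  by_contra! hrx
  have hmin := hf.ge_on_segment self_mem_Ici hx (Icc_subset_segment ⟨hr, hrx⟩)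
  rw [hfr] at hmin
  exact (lt_min hfa hfx).not_ge hmin

/-- The paper's `d_{S̄}(x, y)` is `layerPoly δ (1 + F̄(δ + γ)) (S̄ - y) x`. -/
def layerPoly (δ κ s x : ℝ) : ℝ := s * (1 + δ * x) - κ * x - δ * x ^ 2

section LayerPoly

variable {δ : ℝ} (κ : ℝ)

theorem concaveOn_layerPoly (hδ : 0 ≤ δ) (s : ℝ) : ConcaveOn ℝ univ (layerPoly δ κ s) := by
  have haff : ConcaveOn ℝ univ fun x : ℝ => s + (s * δ - κ) * x :=
    (concaveOn_const s convex_univ).add ((LinearMap.mulLeft ℝ (s * δ - κ)).concaveOn convex_univ)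
  have hsplit : layerPoly δ κ s = (fun x => s + (s * δ - κ) * x) - fun x => δ • x ^ 2 := by
    funext x; simp only [layerPoly, Pi.sub_apply, smul_eq_mul]; ring
  rw [hsplit]
  exact haff.sub (even_two.convexOn_pow.smul hδ)

theorem strictMono_layerPoly (hδ : 0 ≤ δ) {x : ℝ} (hx : 0 ≤ x) :
    StrictMono fun s => layerPoly δ κ s x := by
  intro s s' hss'
  have hslope : 0 < 1 + δ * x := by positivity
  simp only [layerPoly]
  nlinarith

theorem tendsto_layerPoly_atTop (hδ : 0 ≤ δ) {x : ℝ} (hx : 0 ≤ x) :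
    Tendsto (fun s => layerPoly δ κ s x) atTop atTop := by
  have hslope : 0 < 1 + δ * x := by positivity
  simp only [layerPoly, sub_sub]
  exact tendsto_atTop_add_const_right _ _ (tendsto_id.atTop_mul_const hslope)

end LayerPoly

theorem stmt_16_general (δ γ F : ℝ) (hδ : 0 < δ)
    (d : ℝ → ℝ → ℝ → ℝ)
    (hd : d = fun S x y =>
      (S - y) - x - F * (δ + γ) * x + δ * (S - y) * x - δ * x ^ 2)
    (y : ℝ)
    (ρ : ℝ → ℝ)
    (hρ : ∀ S : ℝ, y < S →
      (0 < ρ S ∧ d S (ρ S) y = 0 ∧ ∀ x : ℝ, 0 < x → d S x y = 0 → x = ρ S)) :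
    (∀ x S S' : ℝ, 0 ≤ x → y < S → S < S' → d S x y < d S' x y) ∧
    StrictMonoOn ρ (Set.Ioi y) ∧
    Filter.Tendsto ρ Filter.atTop Filter.atTop := by
  have hd_eq : ∀ S x, d S x y = layerPoly δ (1 + F * (δ + γ)) (S - y) x := by
    intro S x; subst hd; simp only [layerPoly]; ring
  have d_strictMono : ∀ x, 0 ≤ x → StrictMono fun S => d S x y := fun x hx S S' hSS' => by
    simpa only [hd_eq] using strictMono_layerPoly _ hδ.le hx (sub_lt_sub_right hSS' y)
  have lt_root : ∀ S, y < S → ∀ x, 0 ≤ x → 0 < d S x y → x < ρ S := fun S hS x hx hpos => by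
    refine ((concaveOn_layerPoly _ hδ.le (S - y)).subset (subset_univ _) (convex_Ici 0)
      ).lt_of_apply_eq_zero ?_ hx (hd_eq S x ▸ hpos) (hρ S hS).1.le (hd_eq S _ ▸ (hρ S hS).2.1)
    simpa [layerPoly] using hS
  refine ⟨fun x S S' hx _ hSS' => d_strictMono x hx hSS', fun S hS S' hS' hSS' => ?_, ?_⟩
  · refine lt_root S' hS' _ (hρ S hS).1.le ?_
    rw [← (hρ S hS).2.1]
    exact d_strictMono _ (hρ S hS).1.le hSS'
  · refine tendsto_atTop.2 fun M => ?_
    have hM : 0 ≤ max M 0 := le_max_right M 0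
    have hpos : ∀ᶠ S in atTop, 0 < d S (max M 0) y := by
      simp only [hd_eq]
      exact ((tendsto_layerPoly_atTop _ hδ.le hM).comp
        (tendsto_atTop_add_const_right _ (-y) tendsto_id)).eventually_gt_atTop 0
    filter_upwards [eventually_gt_atTop y, hpos] with S hS hSpos
    exact (le_max_left M 0).trans (lt_root S hS _ hM hSpos).le

/-- Monotonicity of the layer polynomial and its positive root in the substrate
total S̄: d is strictly increasing in S̄, hence so is the positive root ρ, and
ρ → +∞ as S̄ → +∞. -/
theorem stmt_16 (lam δ γ F : ℝ) (hlam : 0 < lam) (hδ : 0 < δ) (hγ : 0 < γ)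
    (hF : 0 < F)
    (d : ℝ → ℝ → ℝ → ℝ)
    (hd : d = fun S x y =>
      (S - y) - x - F * (δ + γ) * x + δ * (S - y) * x - δ * x ^ 2)
    (y : ℝ) (hy : 0 ≤ y)
    (ρ : ℝ → ℝ)
    (hρ : ∀ S : ℝ, y < S →
      (0 < ρ S ∧ d S (ρ S) y = 0 ∧ ∀ x : ℝ, 0 < x → d S x y = 0 → x = ρ S)) :
    (∀ x S S' : ℝ, 0 ≤ x → y < S → S < S' → d S x y < d S' x y) ∧
    StrictMonoOn ρ (Set.Ioi y) ∧
    Filter.Tendsto ρ Filter.atTop Filter.atTop :=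
  stmt_16_general δ γ F hδ d hd y ρ hρ
end
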